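/- Let q = 2^k with k odd, n ≥ 3 odd. The group F_{q^n}^× acting on V = F_{q^n} ⊕ F_q·w by β : x + x₀w ↦ βx + x₀w acts transitively on the collection P = {B_α : α ∈ F_{q^n}^×}: for any α, γ ∈ F_{q^n}^× there exists β ∈ F_{q^n}^× with g_β(B_α) = B_γ. -/
import Mathlib

def Dform {F : Type} [Field F] (q : ℕ) (x x0 y y0 : F) : F :=
  (x * y ^ q + x ^ q * y) + (x * y0 + x0 * y) ^ (q + 1)

def lineSpan {F : Type} [Field F] (q : ℕ) (u v : F × F) : Set (F × F) :=
  {p | ∃ a b : F, a ^ q = a ∧ b ^ q = b ∧ p = (a * u.1 + b * v.1, a * u.2 + b * v.2)}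

def IndepPair {F : Type} [Field F] (q : ℕ) (x x0 y y0 : F) : Prop :=
  ∀ a b : F, a ^ q = a → b ^ q = b → a * x + b * y = 0 → a * x0 + b * y0 = 0 → a = 0 ∧ b = 0

def Bset {F : Type} [Field F] (q : ℕ) (α : F) : Set (Set (F × F)) :=
  {ℓ | ∃ x x0 y y0 : F, x0 ^ q = x0 ∧ y0 ^ q = y0 ∧ IndepPair q x x0 y y0 ∧
    ℓ = lineSpan q (x, x0) (y, y0) ∧ Dform q x x0 y y0 = α}

lemma Dform_scale {F : Type} [Field F] (q : ℕ) (β x x0 y y0 : F) :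
    Dform q (β * x) x0 (β * y) y0 = β ^ (q + 1) * Dform q x x0 y y0 := by
  unfold Dform
  rw [show β * x * y0 + x0 * (β * y) = β * (x * y0 + x0 * y) by ring, mul_pow, mul_pow, mul_pow]
  ring

lemma lineSpan_scale {F : Type} [Field F] (q : ℕ) (β x x0 y y0 : F) :
    (fun p : F × F => (β * p.1, p.2)) '' lineSpan q (x, x0) (y, y0)
      = lineSpan q (β * x, x0) (β * y, y0) := by
  ext p
  constructor
  · rintro ⟨r, ⟨a, b, ha, hb, rfl⟩, rfl⟩
    exact ⟨a, b, ha, hb, by simp; ring⟩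
  · rintro ⟨a, b, ha, hb, rfl⟩
    exact ⟨(a * x + b * y, a * x0 + b * y0), ⟨a, b, ha, hb, rfl⟩, by simp; ring⟩

lemma IndepPair_scale {F : Type} [Field F] (q : ℕ) {β : F} (hβ : β ≠ 0) (x x0 y y0 : F)
    (h : IndepPair q x x0 y y0) : IndepPair q (β * x) x0 (β * y) y0 := by
  intro a b ha hb h1 h2
  refine h a b ha hb ?_ h2
  have : β * (a * x + b * y) = 0 := by rw [mul_add]; rw [show β * (a * x) = a * (β * x) by ring,
    show β * (b * y) = b * (β * y) by ring]; exact h1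
  exact (mul_eq_zero.1 this).resolve_left hβ

lemma Bset_scale {F : Type} [Field F] (q : ℕ) {β : F} (hβ : β ≠ 0) (α : F) :
    (fun ℓ : Set (F × F) => (fun p : F × F => (β * p.1, p.2)) '' ℓ) '' Bset q α
      = Bset q (β ^ (q + 1) * α) := by
  ext ℓ
  constructor
  · rintro ⟨ℓ₀, ⟨x, x0, y, y0, hx0, hy0, hind, rfl, hD⟩, rfl⟩
    exact ⟨β * x, x0, β * y, y0, hx0, hy0, IndepPair_scale q hβ x x0 y y0 hind,
      (lineSpan_scale q β x x0 y y0), by rw [Dform_scale, hD]⟩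
  · rintro ⟨x, x0, y, y0, hx0, hy0, hind, rfl, hD⟩
    refine ⟨lineSpan q (β⁻¹ * x, x0) (β⁻¹ * y, y0),
      ⟨β⁻¹ * x, x0, β⁻¹ * y, y0, hx0, hy0,
        IndepPair_scale q (inv_ne_zero hβ) x x0 y y0 hind, rfl, ?_⟩, ?_⟩
    · rw [Dform_scale, hD, ← mul_assoc, ← mul_pow, inv_mul_cancel₀ hβ, one_pow, one_mul]
    · dsimp only
      rw [lineSpan_scale, mul_inv_cancel_left₀ hβ, mul_inv_cancel_left₀ hβ]

lemma coprime_aux (q m : ℕ) (hq2 : 2 ≤ q) (hqe : Even q) (hm : Odd m) (hm1 : 1 ≤ m) :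
    Nat.Coprime (q + 1) (q ^ m - 1) := by
  have hq1 : 1 ≤ q ^ m := Nat.one_le_pow _ _ (by omega)
  set d := Nat.gcd (q + 1) (q ^ m - 1) with hd
  have hd1 : (d : ℤ) ∣ (q : ℤ) + 1 := Int.natCast_dvd_natCast.2 (Nat.gcd_dvd_left _ _)
  have hd2 : (d : ℤ) ∣ (q : ℤ) ^ m - 1 := by
    have h := Int.natCast_dvd_natCast.2 (Nat.gcd_dvd_right (q + 1) (q ^ m - 1))
    rwa [Nat.cast_sub hq1, Nat.cast_pow, Nat.cast_one] at h
  have hmod : (q : ℤ) ≡ -1 [ZMOD d] := by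
    rw [Int.modEq_iff_dvd, show (-1 : ℤ) - (q : ℤ) = -((q : ℤ) + 1) by ring, dvd_neg]
    exact hd1
  have hpow : (q : ℤ) ^ m ≡ -1 [ZMOD d] := by
    have := hmod.pow m
    rwa [hm.neg_one_pow] at this
  have h1 : (q : ℤ) ^ m ≡ 1 [ZMOD d] := by
    rw [Int.modEq_iff_dvd, show (1 : ℤ) - (q : ℤ) ^ m = -((q : ℤ) ^ m - 1) by ring, dvd_neg]
    exact hd2
  have h2 : (d : ℤ) ∣ 2 := by
    have h3 := hpow.symm.trans h1
    rw [Int.modEq_iff_dvd, show (1 : ℤ) - (-1) = 2 by ring] at h3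
    exact h3
  have hd2' : d ∣ 2 := by exact_mod_cast h2
  have hodd : Odd (q ^ m - 1) := by
    have heven : Even (q ^ m) := (Nat.even_pow' (by omega)).2 hqe
    exact Nat.Even.sub_odd hq1 heven odd_one
  rcases (Nat.dvd_prime Nat.prime_two).1 hd2' with h | h
  · rw [Nat.Coprime, ← hd]; exact h
  · exfalso
    have hdvd := Nat.gcd_dvd_right (q + 1) (q ^ m - 1)
    rw [← hd, h] at hdvd
    rcases hodd with ⟨t, ht⟩
    rcases hdvd with ⟨s, hs⟩
    omega

theorem stmt16 (k n : ℕ) (hk : Odd k) (hn : Odd n) (hn3 : 3 ≤ n)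
    (q : ℕ) (hq : q = 2 ^ k)
    (F : Type) [Field F] [Fintype F] (hF : Fintype.card F = q ^ n)
    (α γ : F) (hα : α ≠ 0) (hγ : γ ≠ 0) :
    ∃ β : F, β ≠ 0 ∧
      (fun ℓ : Set (F × F) => (fun p : F × F => (β * p.1, p.2)) '' ℓ) '' Bset q α
        = Bset q γ := by
  have hk1 : 1 ≤ k := hk.pos
  have hcop : (Nat.card Fˣ).Coprime (q + 1) := by
    rw [Nat.card_units, Nat.card_eq_fintype_card, hF]
    exact (coprime_aux q n (by rw [hq]; exact Nat.one_lt_two_pow (by omega))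
      (by rw [hq]; exact (Nat.even_pow' (by omega)).2 even_two) hn (by omega)).symm
  have hδ : γ * α⁻¹ ≠ 0 := mul_ne_zero hγ (inv_ne_zero hα)
  set u := (powCoprime hcop).symm (Units.mk0 (γ * α⁻¹) hδ) with hu
  have huval : (u : F) ^ (q + 1) = γ * α⁻¹ := by
    have h := (powCoprime hcop).apply_symm_apply (Units.mk0 (γ * α⁻¹) hδ)
    have h2 := congrArg Units.val h
    rw [← hu] at h2
    simpa [powCoprime, Units.val_pow_eq_pow_val] using h2
  refine ⟨(u : F), u.ne_zero, ?_⟩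
  rw [Bset_scale q u.ne_zero α, huval, inv_mul_cancel_right₀ hα]
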